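/- arXiv:1310.6266 — 3 statements merged into one kernel-verified Lean document; each statement's English description precedes it below -/
import Mathlib

section
/- Let n be a positive integer and let f assign to each vertex v_i of the complete graph K_n a non-empty finite set A_i of non-negative integers, with the A_i pairwise distinct. Then |A_i + A_j| = |A_i| · |A_j| holds for every pair of distinct indices i, j (i.e., f satisfies the strong condition on every edge of K_n) if and only if the difference sets D_1, D_2, ..., D_n are pairwise disjoint, where D_i is the set of positive differences between elements of A_i. -/
open Pointwise

/-- The difference set of a finite set `A` of non-negative integers:
the set of positive differences `a - a'` with `a, a' ∈ A`, `a > a'`. -/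
def diffSet (A : Finset ℕ) : Finset ℕ :=
  ((A ×ˢ A).filter fun p => p.2 < p.1).image fun p => p.1 - p.2

/-- `f` is an integer additive set-indexer (IASI) of the simple graph `G`:
`f` is injective, assigns nonempty finite sets of non-negative integers to vertices,
and the induced edge function `f⁺(uv) = f(u) + f(v)` is injective on edges. -/
def IsIASI {V : Type*} (G : SimpleGraph V) (f : V → Finset ℕ) : Prop :=
  Function.Injective f ∧ (∀ v, (f v).Nonempty) ∧
    ∀ ⦃u v u' v' : V⦄, G.Adj u v → G.Adj u' v' →
      f u + f v = f u' + f v' → s(u, v) = s(u', v')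

/-- A strong IASI: `|f⁺(uv)| = |f(u)| * |f(v)|` for all edges `uv`. -/
def IsStrongIASI {V : Type*} (G : SimpleGraph V) (f : V → Finset ℕ) : Prop :=
  IsIASI G f ∧ ∀ ⦃u v : V⦄, G.Adj u v → (f u + f v).card = (f u).card * (f v).card

/-- A strongly `k`-uniform IASI: `|f⁺(uv)| = |f(u)| * |f(v)| = k` for all edges `uv`. -/
def IsStronglyUniformIASI {V : Type*} (G : SimpleGraph V) (f : V → Finset ℕ) (k : ℕ) : Prop :=
  IsStrongIASI G f ∧ ∀ ⦃u v : V⦄, G.Adj u v → (f u + f v).card = k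

/-- A weakly `k`-uniform IASI: `|f⁺(uv)| = max(|f(u)|, |f(v)|) = k` for all edges `uv`. -/
def IsWeaklyUniformIASI {V : Type*} (G : SimpleGraph V) (f : V → Finset ℕ) (k : ℕ) : Prop :=
  IsIASI G f ∧ ∀ ⦃u v : V⦄, G.Adj u v →
    (f u + f v).card = max (f u).card (f v).card ∧ (f u + f v).card = k
lemma mem_diffSet {A : Finset ℕ} {d : ℕ} :
    d ∈ diffSet A ↔ ∃ a ∈ A, ∃ a' ∈ A, a' < a ∧ a - a' = d := by
  simp only [diffSet, Finset.mem_image, Finset.mem_filter, Finset.mem_product, Prod.exists]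
  grind

lemma add_ne_add_of_disjoint_diffSet {A B : Finset ℕ} (h : Disjoint (diffSet A) (diffSet B))
    {a a' b b' : ℕ} (ha : a ∈ A) (ha' : a' ∈ A) (hb : b ∈ B) (hb' : b' ∈ B) (hlt : a' < a) :
    a + b ≠ a' + b' := fun heq =>
  Finset.disjoint_left.mp h (mem_diffSet.mpr ⟨a, ha, a', ha', hlt, rfl⟩)
    (mem_diffSet.mpr ⟨b', hb', b, hb, by omega, by omega⟩)

lemma disjoint_diffSet_iff_injOn_add {A B : Finset ℕ} :
    Disjoint (diffSet A) (diffSet B) ↔ (A ×ˢ B : Set (ℕ × ℕ)).InjOn fun p => p.1 + p.2 := by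
  constructor
  · rintro h ⟨a, b⟩ ⟨ha, hb⟩ ⟨a', b'⟩ ⟨ha', hb'⟩ (heq : a + b = a' + b')
    rcases lt_trichotomy a a' with hlt | rfl | hlt
    · exact absurd heq.symm (add_ne_add_of_disjoint_diffSet h ha' ha hb' hb hlt)
    · rw [Nat.add_left_cancel heq]
    · exact absurd heq (add_ne_add_of_disjoint_diffSet h ha ha' hb hb' hlt)
  · refine fun hinj => Finset.disjoint_left.mpr fun d hdA hdB => ?_
    obtain ⟨a, ha, a', ha', hlt, rfl⟩ := mem_diffSet.mp hdA
    obtain ⟨b, hb, b', hb', hlt', hdb⟩ := mem_diffSet.mp hdB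
    -- the common difference `a - a' = b - b'` makes `a + b'` and `a' + b` collide
    have hpair : (a, b') = (a', b) :=
      hinj (Set.mk_mem_prod ha hb') (Set.mk_mem_prod ha' hb) (by simp only; omega)
    exact hlt.ne' (Prod.ext_iff.mp hpair).1

lemma card_add_eq_mul_iff_disjoint_diffSet {A B : Finset ℕ} :
    (A + B).card = A.card * B.card ↔ Disjoint (diffSet A) (diffSet B) :=
  Finset.card_add_iff.trans disjoint_diffSet_iff_injOn_add.symm

theorem completeGraph_strong_iff_pairwise_disjoint_diffSets_general (n : ℕ)
    (f : Fin n → Finset ℕ) :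
    (∀ i j : Fin n, (⊤ : SimpleGraph (Fin n)).Adj i j →
        (f i + f j).card = (f i).card * (f j).card) ↔
      Pairwise fun i j => Disjoint (diffSet (f i)) (diffSet (f j)) := by
  simp only [SimpleGraph.top_adj, card_add_eq_mul_iff_disjoint_diffSet]
  rfl

/-- A labeling of the vertices of the complete graph `K_n` by pairwise distinct
nonempty finite sets of non-negative integers satisfies the strong condition
`|A_i + A_j| = |A_i| * |A_j|` on every edge iff the difference sets `D_1, …, D_n`
are pairwise disjoint. -/
theorem completeGraph_strong_iff_pairwise_disjoint_diffSets (n : ℕ) (hn : 0 < n)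
    (f : Fin n → Finset ℕ) (hne : ∀ i, (f i).Nonempty) (hinj : Function.Injective f) :
    (∀ i j : Fin n, (⊤ : SimpleGraph (Fin n)).Adj i j →
        (f i + f j).card = (f i).card * (f j).card) ↔
      Pairwise fun i j => Disjoint (diffSet (f i)) (diffSet (f j)) :=
  completeGraph_strong_iff_pairwise_disjoint_diffSets_general n f
end

section
/- If a finite simple graph G contains an odd cycle (in particular, if some connected component of G is a clique on at least 3 vertices) and G admits a strongly k-uniform integer additive set-indexer, then k is a perfect square. -/
open Pointwise

/-! Along every edge `uw` the cardinalities satisfy `|f u| * |f w| = k`, and all of them are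
positive, so they alternate between two values along any walk. Going once around an odd
cycle returns to the start after an odd number of steps, whence `|f v| * |f v| = k`. -/

namespace SimpleGraph.Walk

variable {V M : Type*} [CommMonoidWithZero M] [IsCancelMulZero M] {G : SimpleGraph V}
  {g : V → M} {k : M}

theorem eq_and_mul_eq_of_length_parity (hg : ∀ v, g v ≠ 0)
    (hadj : ∀ ⦃u w⦄, G.Adj u w → g u * g w = k) {u w : V} (p : G.Walk u w) :
    (Even p.length → g u = g w) ∧ (Odd p.length → g u * g w = k) := by
  induction p with
  | nil => exact ⟨fun _ => rfl, fun h => absurd h (by simp)⟩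
  | @cons a x b h p ih =>
    rw [length_cons, Nat.even_add_one, Nat.odd_add_one, Nat.not_even_iff_odd,
      Nat.not_odd_iff_even]
    refine ⟨fun hp => mul_right_cancel₀ (hg x) ?_, fun hp => ih.1 hp ▸ hadj h⟩
    rw [hadj h, mul_comm, ih.2 hp]

theorem mul_self_eq_of_odd_length (hg : ∀ v, g v ≠ 0)
    (hadj : ∀ ⦃u w⦄, G.Adj u w → g u * g w = k) {v : V} (c : G.Walk v v)
    (hc : Odd c.length) : g v * g v = k :=
  (eq_and_mul_eq_of_length_parity hg hadj c).2 hc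

end SimpleGraph.Walk

theorem IsIASI.card_ne_zero {V : Type*} {G : SimpleGraph V} {f : V → Finset ℕ}
    (hf : IsIASI G f) (v : V) : (f v).card ≠ 0 :=
  (hf.2.1 v).card_ne_zero

theorem IsStronglyUniformIASI.card_mul_card {V : Type*} {G : SimpleGraph V}
    {f : V → Finset ℕ} {k : ℕ} (hf : IsStronglyUniformIASI G f k) ⦃u w : V⦄ (h : G.Adj u w) :
    (f u).card * (f w).card = k :=
  (hf.1.2 h).symm.trans (hf.2 h)

theorem oddCycle_stronglyUniform_perfectSquare_general {V : Type*} (G : SimpleGraph V)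
    (k : ℕ) (hodd : ∃ (v : V) (c : G.Walk v v), c.IsCycle ∧ Odd c.length)
    (hf : ∃ f : V → Finset ℕ, IsStronglyUniformIASI G f k) :
    ∃ l : ℕ, l * l = k := by
  obtain ⟨f, hf⟩ := hf
  obtain ⟨v, c, -, hc⟩ := hodd
  exact ⟨(f v).card, c.mul_self_eq_of_odd_length (g := fun u => (f u).card)
    hf.1.1.card_ne_zero hf.card_mul_card hc⟩

/-- If a finite simple graph `G` contains an odd cycle and admits a strongly
`k`-uniform IASI, then `k` is a perfect square. -/
theorem oddCycle_stronglyUniform_perfectSquare {V : Type*} [Fintype V] (G : SimpleGraph V)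
    (k : ℕ) (hodd : ∃ (v : V) (c : G.Walk v v), c.IsCycle ∧ Odd c.length)
    (hf : ∃ f : V → Finset ℕ, IsStronglyUniformIASI G f k) :
    ∃ l : ℕ, l * l = k :=
  oddCycle_stronglyUniform_perfectSquare_general G k hodd hf
end

section
/- Let G be a finite connected simple graph with at least one edge and let k be a positive integer. Then G admits a strongly k-uniform integer additive set-indexer if and only if G is bipartite or k is a perfect square; moreover, in the non-bipartite case every such IASI is (k, l)-completely uniform with k = l². -/
open Pointwise

/-!
Write `ℓ v = |f v|`; a strongly `k`-uniform IASI has `ℓ u * ℓ v = k` on every edge. If no edge has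
`ℓ u = ℓ v`, colouring `v` by whether `ℓ v ^ 2 ≤ k` is a proper 2-colouring. Otherwise `ℓ u ^ 2 = k`
on some edge, and `ℓ u * ℓ v = k` propagates the value `ℓ u` through the connected graph.

Conversely, any positive bounded `ℓ` with `ℓ u * ℓ v = k` on edges (`1` and `k` on the two colour
classes, or constantly `√k`) is realised by `f v = {M ^ e v, 2 * M ^ e v, …, ℓ v * M ^ e v}` for an
injective `e : V → ℕ` and a base `M > ℓ`: the elements of `f u + f v` are two-digit base-`M`
numerals, so they are pairwise distinct, and the least of them, `M ^ e u + M ^ e v`, determines the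
edge `uv`.
-/

open Finset Pointwise

lemma mul_pow_add_mul_pow_inj_of_lt {M P Q a b a' b' : ℕ} (hPQ : P < Q) (ha : a < M)
    (ha' : a' < M) (h : a * M ^ P + b * M ^ Q = a' * M ^ P + b' * M ^ Q) : a = a' ∧ b = b' := by
  have hM : 0 < M := by omega
  have hMP : 0 < M ^ P := by positivity
  have hMQ : 0 < M ^ Q := by positivity
  have low_lt : ∀ {c}, c < M → c * M ^ P < M ^ Q := fun hc =>
    calc _ < M * M ^ P := Nat.mul_lt_mul_of_pos_right hc hMP
      _ = M ^ (P + 1) := by ring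
      _ ≤ M ^ Q := Nat.pow_le_pow_right (by omega) hPQ
  have hlow : a * M ^ P = a' * M ^ P := by
    have := congrArg (· % M ^ Q) h
    simpa [Nat.add_mul_mod_self_right, Nat.mod_eq_of_lt (low_lt ha),
      Nat.mod_eq_of_lt (low_lt ha')] using this
  refine ⟨Nat.eq_of_mul_eq_mul_right hMP hlow, Nat.eq_of_mul_eq_mul_right hMQ ?_⟩
  omega

lemma mul_pow_add_mul_pow_inj {M P Q a b a' b' : ℕ} (hPQ : P ≠ Q) (ha : a < M) (hb : b < M)
    (ha' : a' < M) (hb' : b' < M) (h : a * M ^ P + b * M ^ Q = a' * M ^ P + b' * M ^ Q) :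
    a = a' ∧ b = b' := by
  rcases hPQ.lt_or_gt with hlt | hlt
  · exact mul_pow_add_mul_pow_inj_of_lt hlt ha ha' h
  · exact (mul_pow_add_mul_pow_inj_of_lt hlt hb hb' (by omega)).symm

lemma Nat.log_pow_add_pow_of_lt {M P Q : ℕ} (hM : 2 ≤ M) (hPQ : P < Q) :
    Nat.log M (M ^ P + M ^ Q) = Q := by
  refine Nat.log_eq_of_pow_le_of_lt_pow (Nat.le_add_left _ _) ?_
  calc M ^ P + M ^ Q < M ^ Q + M ^ Q := by
        have := Nat.pow_lt_pow_right (by omega : 1 < M) hPQ; omega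
    _ = 2 * M ^ Q := by ring
    _ ≤ M * M ^ Q := Nat.mul_le_mul_right _ hM
    _ = M ^ (Q + 1) := by ring

lemma sym2_eq_of_pow_add_pow_eq {M P Q P' Q' : ℕ} (hM : 2 ≤ M) (hPQ : P ≠ Q) (hPQ' : P' ≠ Q')
    (h : M ^ P + M ^ Q = M ^ P' + M ^ Q') : s(P, Q) = s(P', Q') := by
  wlog hlt : P < Q generalizing P Q
  · rw [Sym2.eq_swap]; exact this hPQ.symm (by omega) (by omega)
  wlog hlt' : P' < Q' generalizing P' Q'
  · rw [Sym2.eq_swap (a := P')]; exact this hPQ'.symm (by omega) (by omega)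
  have hQ : Q = Q' := by
    rw [← Nat.log_pow_add_pow_of_lt hM hlt, h, Nat.log_pow_add_pow_of_lt hM hlt']
  subst hQ
  rw [Nat.pow_right_injective hM (by omega : M ^ P = M ^ P')]

def powMultiples (M P n : ℕ) : Finset ℕ := (Icc 1 n).image (· * M ^ P)

section powMultiples

variable {M P Q a b : ℕ}

lemma mem_powMultiples {x : ℕ} : x ∈ powMultiples M P a ↔ ∃ i, 1 ≤ i ∧ i ≤ a ∧ i * M ^ P = x := by
  simp [powMultiples, and_assoc]

lemma card_powMultiples (hM : 0 < M) : #(powMultiples M P a) = a := by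
  rw [powMultiples, card_image_of_injective _ (fun i j h => Nat.eq_of_mul_eq_mul_right
    (by positivity) h), Nat.card_Icc, Nat.add_sub_cancel]

lemma isLeast_powMultiples (ha : 0 < a) : IsLeast (powMultiples M P a : Set ℕ) (M ^ P) := by
  refine ⟨mem_powMultiples.2 ⟨1, le_rfl, ha, one_mul _⟩, ?_⟩
  intro x hx
  obtain ⟨i, hi, -, rfl⟩ := mem_powMultiples.1 hx
  exact Nat.le_mul_of_pos_left _ hi

lemma isLeast_powMultiples_add (ha : 0 < a) (hb : 0 < b) :
    IsLeast (powMultiples M P a + powMultiples M Q b : Finset ℕ) (M ^ P + M ^ Q) := by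
  have hP := isLeast_powMultiples (M := M) (P := P) ha
  have hQ := isLeast_powMultiples (M := M) (P := Q) hb
  rw [coe_add]
  exact ⟨Set.add_mem_add hP.1 hQ.1, add_mem_lowerBounds_add hP.2 hQ.2⟩

lemma card_powMultiples_add (hPQ : P ≠ Q) (ha : a < M) (hb : b < M) :
    #(powMultiples M P a + powMultiples M Q b) = a * b := by
  have hM : 0 < M := by omega
  conv_rhs => rw [← card_powMultiples (P := P) (a := a) hM, ← card_powMultiples (P := Q) (a := b) hM]
  rw [card_add_iff]
  rintro ⟨x, y⟩ hxy ⟨x', y'⟩ hxy' (heq : x + y = x' + y')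
  simp only [Set.mem_prod, mem_coe, mem_powMultiples] at hxy hxy'
  obtain ⟨⟨i, -, hi, rfl⟩, ⟨j, -, hj, rfl⟩⟩ := hxy
  obtain ⟨⟨i', -, hi', rfl⟩, ⟨j', -, hj', rfl⟩⟩ := hxy'
  obtain ⟨rfl, rfl⟩ :=
    mul_pow_add_mul_pow_inj hPQ (by omega) (by omega) (by omega) (by omega) heq
  rfl

end powMultiples

theorem exists_isStrongIASI_card_eq {V : Type*} [Countable V] (G : SimpleGraph V) {t : V → ℕ}
    (ht : ∀ v, 0 < t v) (hbdd : BddAbove (Set.range t)) :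
    ∃ f : V → Finset ℕ, IsStrongIASI G f ∧ ∀ v, #(f v) = t v := by
  obtain ⟨e, he⟩ := Countable.exists_injective_nat V
  obtain ⟨B, hB⟩ := hbdd
  have htM : ∀ v, t v < B + 2 := fun v => by have := hB ⟨v, rfl⟩; omega
  have hM : 2 ≤ B + 2 := by omega
  refine ⟨fun v => powMultiples (B + 2) (e v) (t v), ⟨⟨?_, ?_, ?_⟩, ?_⟩,
    fun v => card_powMultiples (by omega)⟩
  · intro u v (huv : powMultiples _ _ _ = powMultiples _ _ _)
    have hv := isLeast_powMultiples (M := B + 2) (P := e v) (ht v)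
    rw [← huv] at hv
    exact he (Nat.pow_right_injective hM ((isLeast_powMultiples (ht u)).unique hv))
  · exact fun v => card_pos.1 ((card_powMultiples (by omega)).trans_gt (ht v))
  · intro u v u' v' huv hu'v' (heq : powMultiples _ _ _ + powMultiples _ _ _ = _)
    have hmin' := isLeast_powMultiples_add (M := B + 2) (P := e u') (Q := e v') (ht u') (ht v')
    rw [← heq] at hmin'
    have hmin := (isLeast_powMultiples_add (ht u) (ht v)).unique hmin'
    refine Sym2.map.injective he ?_
    simp only [Sym2.map_mk]
    exact sym2_eq_of_pow_add_pow_eq hM (he.ne huv.ne) (he.ne hu'v'.ne) hmin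
  · intro u v huv
    simp only [card_powMultiples_add (he.ne huv.ne) (htM u) (htM v),
      card_powMultiples (by omega : 0 < B + 2)]

theorem exists_isStronglyUniformIASI_of_mul_eq {V : Type*} [Countable V] (G : SimpleGraph V)
    {t : V → ℕ} {k : ℕ} (ht : ∀ v, 0 < t v) (hbdd : BddAbove (Set.range t))
    (hk : ∀ u v, G.Adj u v → t u * t v = k) : ∃ f : V → Finset ℕ, IsStronglyUniformIASI G f k := by
  obtain ⟨f, hf, hcard⟩ := exists_isStrongIASI_card_eq G ht hbdd
  exact ⟨f, hf, fun u v huv => by rw [hf.2 huv, hcard, hcard, hk u v huv]⟩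

lemma SimpleGraph.colorable_two_of_adj_mul_eq {V : Type*} {G : SimpleGraph V} {t : V → ℕ} {k : ℕ}
    (hk : ∀ u v, G.Adj u v → t u * t v = k) (hne : ∀ u v, G.Adj u v → t u ≠ t v) :
    G.Colorable 2 := by
  refine (Coloring.mk (fun v => decide (t v * t v ≤ k)) fun {u v} huv hcol => ?_).colorable
  have hmul := hk u v huv
  simp only [decide_eq_decide] at hcol
  rcases (hne u v huv).lt_or_gt with hlt | hlt
  · have := hcol.1 (hmul ▸ Nat.mul_le_mul_left _ hlt.le)
    nlinarith
  · have := hcol.2 (hmul ▸ Nat.mul_le_mul_right _ hlt.le)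
    nlinarith

lemma SimpleGraph.Preconnected.forall_of_adj {V : Type*} {G : SimpleGraph V} (hG : G.Preconnected)
    {p : V → Prop} (hp : ∀ u v, G.Adj u v → p u → p v) {x : V} (hx : p x) (v : V) : p v := by
  obtain ⟨w⟩ := hG x v
  induction w with
  | nil => exact hx
  | cons huv _ ih => exact ih (hp _ _ huv hx)

namespace IsStronglyUniformIASI

variable {V : Type*} {G : SimpleGraph V} {f : V → Finset ℕ} {k : ℕ}

lemma card_mul_card_s16 (hf : IsStronglyUniformIASI G f k) {u v : V} (huv : G.Adj u v) :
    #(f u) * #(f v) = k :=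
  (hf.1.2 huv).symm.trans (hf.2 huv)

theorem exists_card_eq_of_not_colorable (hf : IsStronglyUniformIASI G f k)
    (hG : G.Preconnected) (hnb : ¬ G.Colorable 2) :
    ∃ l, l * l = k ∧ ∀ v, #(f v) = l := by
  obtain ⟨u, v, huv, hcard⟩ : ∃ u v, G.Adj u v ∧ #(f u) = #(f v) := by
    by_contra! hne
    exact hnb (SimpleGraph.colorable_two_of_adj_mul_eq (fun _ _ => hf.card_mul_card_s16) hne)
  have hl : #(f u) * #(f u) = k := by rw [← hf.card_mul_card_s16 huv, hcard]
  have hpos : 0 < #(f u) := card_pos.2 (hf.1.1.2.1 u)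
  refine ⟨#(f u), hl, hG.forall_of_adj (fun x y hxy hx => ?_) rfl⟩
  have := hf.card_mul_card_s16 hxy
  rw [hx, ← hl] at this
  exact Nat.eq_of_mul_eq_mul_left hpos this

end IsStronglyUniformIASI

theorem connected_stronglyUniform_iff_bipartite_or_square_general {V : Type*} [Fintype V]
    (G : SimpleGraph V) (hconn : G.Connected) (k : ℕ) (hk : 0 < k) :
    ((∃ f : V → Finset ℕ, IsStronglyUniformIASI G f k) ↔
        G.Colorable 2 ∨ ∃ l : ℕ, l * l = k) ∧
      (¬ G.Colorable 2 → ∀ f : V → Finset ℕ, IsStronglyUniformIASI G f k →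
        ∃ l : ℕ, l * l = k ∧ ∀ v : V, (f v).card = l) := by
  have uniform : ¬ G.Colorable 2 → ∀ f : V → Finset ℕ, IsStronglyUniformIASI G f k →
      ∃ l : ℕ, l * l = k ∧ ∀ v : V, (f v).card = l :=
    fun hnb _ hf => hf.exists_card_eq_of_not_colorable hconn.preconnected hnb
  refine ⟨⟨fun ⟨f, hf⟩ => ?_, ?_⟩, uniform⟩
  · by_cases hb : G.Colorable 2
    · exact Or.inl hb
    · obtain ⟨l, hl, -⟩ := uniform hb f hf
      exact Or.inr ⟨l, hl⟩
  · rintro (hC | ⟨l, rfl⟩)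
    · obtain ⟨C⟩ := hC
      refine exists_isStronglyUniformIASI_of_mul_eq G (t := fun v => k ^ (C v : ℕ))
        (fun v => pow_pos hk _) (Set.finite_range _).bddAbove fun u v huv => ?_
      have hC : (C u : ℕ) + C v = 1 := by
        have := Fin.val_injective.ne (C.valid huv); omega
      rw [← pow_add, hC, pow_one]
    · exact exists_isStronglyUniformIASI_of_mul_eq G (fun _ => Nat.pos_of_mul_pos_left hk)
        (Set.finite_range _).bddAbove fun _ _ _ => rfl

/-- A finite connected simple graph `G` with at least one edge admits a strongly
`k`-uniform IASI iff `G` is bipartite or `k` is a perfect square; moreover, if `G` is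
non-bipartite, every such IASI is `(k, l)`-completely uniform with `k = l²`. -/
theorem connected_stronglyUniform_iff_bipartite_or_square {V : Type*} [Fintype V]
    (G : SimpleGraph V) (hconn : G.Connected) (he : G.edgeSet.Nonempty) (k : ℕ) (hk : 0 < k) :
    ((∃ f : V → Finset ℕ, IsStronglyUniformIASI G f k) ↔
        G.Colorable 2 ∨ ∃ l : ℕ, l * l = k) ∧
      (¬ G.Colorable 2 → ∀ f : V → Finset ℕ, IsStronglyUniformIASI G f k →
        ∃ l : ℕ, l * l = k ∧ ∀ v : V, (f v).card = l) :=
  connected_stronglyUniform_iff_bipartite_or_square_general G hconn k hk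
end
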